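/- For every odd prime p, the representations χ_{a,b} for (a,b) ∈ (ZMod p)² together with ρ_k for k ∈ ZMod p, k ≠ 0 form a complete set of pairwise inequivalent irreducible complex representations of the Heisenberg group H_p: each of them is irreducible, no two of them are isomorphic, and every finite-dimensional irreducible complex representation of H_p is isomorphic to one of them. -/

import Mathlib

@[ext]
structure Heis (p : ℕ) where
  x : ZMod p
  y : ZMod p
  z : ZMod p

namespace Heis

variable {p : ℕ}

instance : Mul (Heis p) := ⟨fun a b => ⟨a.x + b.x, a.y + b.y, a.z + b.z + a.x * b.y⟩⟩
instance : One (Heis p) := ⟨⟨0, 0, 0⟩⟩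
instance : Inv (Heis p) := ⟨fun a => ⟨-a.x, -a.y, a.x * a.y - a.z⟩⟩

lemma mul_def (a b : Heis p) :
    a * b = ⟨a.x + b.x, a.y + b.y, a.z + b.z + a.x * b.y⟩ := rfl
lemma one_def : (1 : Heis p) = ⟨0, 0, 0⟩ := rfl
lemma inv_def (a : Heis p) : a⁻¹ = ⟨-a.x, -a.y, a.x * a.y - a.z⟩ := rfl

instance instGroup : Group (Heis p) where
  mul_assoc a b c := by ext <;> simp [mul_def] <;> ring
  one_mul a := by ext <;> simp [mul_def, one_def]
  mul_one a := by ext <;> simp [mul_def, one_def]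
  inv_mul_cancel a := by ext <;> simp [mul_def, inv_def, one_def]

end Heis

/-- `ω^v = exp(2πi·v.val/p)` for `v : ZMod p`, where `ω = exp(2πi/p)`. -/
noncomputable def omegaPow (p : ℕ) (v : ZMod p) : ℂ :=
  Complex.exp (2 * Real.pi * Complex.I * (v.val : ℂ) / p)

/-- The degree-`p` representation `ρ_k` of `H_p` (`k ≠ 0`), as a matrix-valued function:
the `(a,b)` entry of `ρ_k(x,y,z)` is `ω^{k(z+ya)}` if `b = a + x`, and `0` otherwise. -/
noncomputable def rho (p : ℕ) (k : ZMod p) (g : Heis p) :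
    Matrix (ZMod p) (ZMod p) ℂ :=
  Matrix.of fun a b => if b = a + g.x then omegaPow p (k * (g.z + g.y * a)) else 0

/-- The one-dimensional representation `χ_{a,b}` of `H_p`:
`χ_{a,b}(x,y,z) = ω^{ax+by}`. -/
noncomputable def chi (p : ℕ) (a b : ZMod p) (g : Heis p) : ℂ :=
  omegaPow p (a * g.x + b * g.y)
noncomputable def zeta (p : ℕ) : ℂ := Complex.exp (2 * Real.pi * Complex.I / p)

lemma zeta_prim (p : ℕ) [NeZero p] : IsPrimitiveRoot (zeta p) p :=
  Complex.isPrimitiveRoot_exp p (NeZero.ne p)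

lemma omegaPow_eq (p : ℕ) (v : ZMod p) : omegaPow p v = zeta p ^ v.val := by
  rw [omegaPow, zeta, ← Complex.exp_nat_mul]
  exact congrArg Complex.exp (by ring)

lemma omegaPow_natCast (p : ℕ) [NeZero p] (n : ℕ) :
    omegaPow p ((n : ZMod p)) = zeta p ^ n := by
  rw [omegaPow_eq, ZMod.val_natCast]
  conv_rhs => rw [← Nat.div_add_mod n p]
  rw [pow_add, pow_mul, (zeta_prim p).pow_eq_one, one_pow, one_mul]

lemma omegaPow_val (p : ℕ) [NeZero p] (v : ZMod p) :
    zeta p ^ v.val = omegaPow p v := (omegaPow_eq p v).symm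

lemma natCast_val_self (p : ℕ) [NeZero p] (v : ZMod p) : ((v.val : ℕ) : ZMod p) = v := by
  simp [ZMod.natCast_val, ZMod.cast_id]

lemma omegaPow_add (p : ℕ) [NeZero p] (u v : ZMod p) :
    omegaPow p (u + v) = omegaPow p u * omegaPow p v := by
  have h : ((u.val + v.val : ℕ) : ZMod p) = u + v := by
    push_cast [natCast_val_self]; ring
  rw [← h, omegaPow_natCast, pow_add, omegaPow_eq, omegaPow_eq]

lemma omegaPow_zero (p : ℕ) : omegaPow p (0 : ZMod p) = 1 := by
  simp [omegaPow]

lemma omegaPow_ne_zero (p : ℕ) (v : ZMod p) : omegaPow p v ≠ 0 :=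
  Complex.exp_ne_zero _

lemma omegaPow_inj (p : ℕ) [NeZero p] {u v : ZMod p}
    (h : omegaPow p u = omegaPow p v) : u = v := by
  rw [omegaPow_eq, omegaPow_eq] at h
  have := (zeta_prim p).pow_inj u.val_lt v.val_lt h
  calc u = ((u.val : ℕ) : ZMod p) := (natCast_val_self p u).symm
    _ = ((v.val : ℕ) : ZMod p) := by rw [this]
    _ = v := natCast_val_self p v

lemma sum_omegaPow (p : ℕ) [NeZero p] (hp1 : 1 < p) :
    ∑ y : ZMod p, omegaPow p y = 0 := by
  have : ∑ y : ZMod p, omegaPow p y = ∑ i ∈ Finset.range p, zeta p ^ i := by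
    refine Finset.sum_nbij' (fun y => y.val) (fun i => (i : ZMod p)) ?_ ?_ ?_ ?_ ?_
    · intro y _; exact Finset.mem_range.2 y.val_lt
    · intro i _; exact Finset.mem_univ _
    · intro y _; exact natCast_val_self p y
    · intro i hi; rw [ZMod.val_natCast, Nat.mod_eq_of_lt (Finset.mem_range.1 hi)]
    · intro y _; exact omegaPow_eq p y
  rw [this, (zeta_prim p).geom_sum_eq_zero hp1]

lemma sum_omegaPow_mul (p : ℕ) [NeZero p] [Fact p.Prime] (c : ZMod p) (hc : c ≠ 0) :
    ∑ y : ZMod p, omegaPow p (c * y) = 0 := by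
  have h := Fintype.sum_bijective (⇑(Equiv.mulLeft₀ c hc)) (Equiv.bijective _)
    (fun y => omegaPow p (c * y)) (fun y => omegaPow p y) (fun y => rfl)
  rw [h]; exact sum_omegaPow p (Fact.out : p.Prime).one_lt

lemma omegaPow_mul_val (p : ℕ) [NeZero p] (u t : ZMod p) :
    omegaPow p (u * t) = omegaPow p u ^ t.val := by
  rw [omegaPow_eq p u, ← pow_mul, ← omegaPow_natCast p (u.val * t.val)]
  congr 1
  push_cast [natCast_val_self]
  ring
namespace Heis
variable {p : ℕ}

lemma pow_eq (g : Heis p) (n : ℕ) :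
    g ^ n = ⟨(n : ZMod p) * g.x, (n : ZMod p) * g.y,
      (n : ZMod p) * g.z + ((n.choose 2 : ℕ) : ZMod p) * (g.x * g.y)⟩ := by
  induction n with
  | zero => ext <;> simp [one_def]
  | succ n ih =>
    rw [pow_succ, ih, mul_def]
    ext <;> simp only [] <;> push_cast [Nat.choose_succ_succ, Nat.choose_one_right] <;> ring

lemma pow_p [NeZero p] (hp : p.Prime) (ho : Odd p) (g : Heis p) : g ^ p = 1 := by
  have h2 : 2 ∣ p - 1 := by
    obtain ⟨m, hm⟩ := ho; omega
  have hc : ((p.choose 2 : ℕ) : ZMod p) = 0 := by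
    rw [Nat.choose_two_right, Nat.mul_div_assoc p h2]
    push_cast [ZMod.natCast_self]; ring
  rw [pow_eq, one_def]
  ext <;> simp [hc, ZMod.natCast_self]

lemma decomp (g : Heis p) :
    g = (⟨g.x, 0, 0⟩ : Heis p) * ⟨0, g.y, 0⟩ * ⟨0, 0, g.z - g.x * g.y⟩ := by
  ext <;> simp [mul_def] <;> ring

lemma xpow [NeZero p] (x : ZMod p) : (⟨1, 0, 0⟩ : Heis p) ^ x.val = ⟨x, 0, 0⟩ := by
  rw [pow_eq]; ext <;> simp [natCast_val_self]

lemma ypow [NeZero p] (y : ZMod p) : (⟨0, 1, 0⟩ : Heis p) ^ y.val = ⟨0, y, 0⟩ := by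
  rw [pow_eq]; ext <;> simp [natCast_val_self]

lemma zpow [NeZero p] (z : ZMod p) : (⟨0, 0, 1⟩ : Heis p) ^ z.val = ⟨0, 0, z⟩ := by
  rw [pow_eq]; ext <;> simp [natCast_val_self]

lemma central_mul (t : ZMod p) (g : Heis p) :
    (⟨0, 0, t⟩ : Heis p) * g = g * ⟨0, 0, t⟩ := by
  ext <;> simp [mul_def] <;> ring

lemma comm_central (g h : Heis p) :
    g * h = (⟨0, 0, g.x * h.y - h.x * g.y⟩ : Heis p) * (h * g) := by
  ext <;> simp [mul_def] <;> ring

end Heis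

/-- Schur: an operator commuting with an irreducible rep is scalar. -/
lemma schur_scalar {p : ℕ} {V : Type} [AddCommGroup V] [Module ℂ V]
    [FiniteDimensional ℂ V] [Nontrivial V]
    (π : Representation ℂ (Heis p) V)
    (hirr : ∀ W : Submodule ℂ V, (∀ g : Heis p, ∀ v ∈ W, π g v ∈ W) → W = ⊥ ∨ W = ⊤)
    (T : V →ₗ[ℂ] V) (hT : ∀ (g : Heis p) (v : V), T (π g v) = π g (T v)) :
    ∃ μ : ℂ, ∀ v, T v = μ • v := by
  obtain ⟨μ, hμ⟩ := Module.End.exists_eigenvalue (T : Module.End ℂ V)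
  refine ⟨μ, ?_⟩
  have hW : ∀ (g : Heis p), ∀ v ∈ Module.End.eigenspace T μ, π g v ∈ Module.End.eigenspace T μ := by
    intro g v hv
    rw [Module.End.mem_eigenspace_iff] at hv ⊢
    rw [hT g v, hv, map_smul]
  rcases hirr _ hW with h | h
  · exact absurd h hμ
  · intro v
    have : v ∈ Module.End.eigenspace T μ := h ▸ Submodule.mem_top
    exact Module.End.mem_eigenspace_iff.1 this

/-- For every odd prime `p`, the representations `χ_{a,b}`
(`(a,b) ∈ (ZMod p)²`) together with `ρ_k` (`k ∈ ZMod p`, `k ≠ 0`) form a complete set of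
pairwise inequivalent irreducible complex representations of the Heisenberg group `H_p`:
each is irreducible, no two of them are isomorphic, and every finite-dimensional
irreducible complex representation of `H_p` is isomorphic to one of them. -/
theorem heisenberg_complete_irreducibles (p : ℕ) [NeZero p] (hp : p.Prime) (ho : Odd p) :
    -- each χ_{a,b} is irreducible (on the 1-dimensional space ℂ)
    (∀ a b : ZMod p, ∀ W : Submodule ℂ ℂ,
        (∀ g : Heis p, ∀ v ∈ W, chi p a b g * v ∈ W) → W = ⊥ ∨ W = ⊤) ∧
    -- each ρ_k (k ≠ 0) is irreducible
    (∀ k : ZMod p, k ≠ 0 → ∀ W : Submodule ℂ (ZMod p → ℂ),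
        (∀ g : Heis p, ∀ v ∈ W, (rho p k g).mulVec v ∈ W) → W = ⊥ ∨ W = ⊤) ∧
    -- distinct χ's are non-isomorphic
    (∀ a b a' b' : ZMod p, (a, b) ≠ (a', b') →
        ¬∃ e : ℂ ≃ₗ[ℂ] ℂ, ∀ (g : Heis p) (v : ℂ),
          e (chi p a b g * v) = chi p a' b' g * e v) ∧
    -- distinct ρ's are non-isomorphic
    (∀ k k' : ZMod p, k ≠ 0 → k' ≠ 0 → k ≠ k' →
        ¬∃ e : (ZMod p → ℂ) ≃ₗ[ℂ] (ZMod p → ℂ), ∀ (g : Heis p) (v : ZMod p → ℂ),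
          e ((rho p k g).mulVec v) = (rho p k' g).mulVec (e v)) ∧
    -- no χ is isomorphic to a ρ
    (∀ a b k : ZMod p, k ≠ 0 →
        ¬∃ e : ℂ ≃ₗ[ℂ] (ZMod p → ℂ), ∀ (g : Heis p) (v : ℂ),
          e (chi p a b g * v) = (rho p k g).mulVec (e v)) ∧
    -- completeness: every f.d. irreducible complex representation of H_p is isomorphic
    -- to some χ_{a,b} or some ρ_k
    ∀ (V : Type) [AddCommGroup V] [Module ℂ V] [FiniteDimensional ℂ V],
      ∀ π : Representation ℂ (Heis p) V, Nontrivial V →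
        (∀ W : Submodule ℂ V, (∀ g : Heis p, ∀ v ∈ W, π g v ∈ W) → W = ⊥ ∨ W = ⊤) →
        (∃ a b : ZMod p, ∃ e : V ≃ₗ[ℂ] ℂ, ∀ (g : Heis p) (v : V),
            e (π g v) = chi p a b g * e v) ∨
        (∃ k : ZMod p, k ≠ 0 ∧ ∃ e : V ≃ₗ[ℂ] (ZMod p → ℂ), ∀ (g : Heis p) (v : V),
            e (π g v) = (rho p k g).mulVec (e v)) := by
  haveI : Fact p.Prime := ⟨hp⟩
  have hp1 : 1 < p := hp.one_lt
  refine ⟨?_, ?_, ?_, ?_, ?_, ?_⟩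
  -- Part 1: χ irreducible
  · intro a b W _
    by_cases h : W = ⊥
    · exact Or.inl h
    right
    obtain ⟨u, huW, hu0⟩ := (Submodule.ne_bot_iff W).1 h
    rw [Submodule.eq_top_iff']
    intro x
    have := W.smul_mem (x * u⁻¹) huW
    rwa [smul_eq_mul, mul_assoc, inv_mul_cancel₀ hu0, mul_one] at this
  -- Part 2: ρ_k irreducible
  · intro k hk W hW
    by_cases h : W = ⊥
    · exact Or.inl h
    right
    obtain ⟨u, huW, hu0⟩ := (Submodule.ne_bot_iff W).1 h
    obtain ⟨a0, ha0⟩ : ∃ a0, u a0 ≠ 0 := by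
      by_contra hc; push_neg at hc; exact hu0 (funext hc)
    have hdiag : ∀ (y : ZMod p) (a : ZMod p),
        (rho p k ⟨0, y, 0⟩).mulVec u a = omegaPow p (k * (y * a)) * u a := by
      intro y a
      simp [rho, Matrix.mulVec, dotProduct, ite_mul]
    have hsingle : Pi.single a0 (1 : ℂ) ∈ W := by
      have hsum : (∑ y : ZMod p,
          omegaPow p (-(k * (y * a0))) • (rho p k ⟨0, y, 0⟩).mulVec u) ∈ W :=
        Submodule.sum_mem _ (fun y _ => Submodule.smul_mem _ _ (hW _ u huW))
      have heq : (∑ y : ZMod p, omegaPow p (-(k * (y * a0))) • (rho p k ⟨0, y, 0⟩).mulVec u)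
          = ((p : ℂ) * u a0) • (Pi.single a0 (1:ℂ) : ZMod p → ℂ) := by
        funext a
        simp only [Finset.sum_apply, Pi.smul_apply, smul_eq_mul, hdiag]
        have hterm : ∀ y : ZMod p,
            omegaPow p (-(k * (y * a0))) * (omegaPow p (k * (y * a)) * u a)
            = omegaPow p ((k * (a - a0)) * y) * u a := by
          intro y
          rw [← mul_assoc, ← omegaPow_add]
          congr 2
          ring
        rw [Finset.sum_congr rfl (fun y _ => hterm y), ← Finset.sum_mul]
        by_cases hca : a = a0
        · subst hca
          have h0 : ∀ y : ZMod p, (k * (a - a)) * y = 0 := by intro y; ring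
          simp only [h0, omegaPow_zero]
          simp [Finset.card_univ, ZMod.card, Pi.single_apply, mul_comm]
        · rw [sum_omegaPow_mul p (k * (a - a0)) (mul_ne_zero hk (sub_ne_zero.2 hca))]
          simp [Pi.single_apply, hca]
      have hp0 : ((p : ℂ) * u a0) ≠ 0 :=
        mul_ne_zero (Nat.cast_ne_zero.2 (NeZero.ne p)) ha0
      have h2 := W.smul_mem ((p : ℂ) * u a0)⁻¹ hsum
      rwa [heq, smul_smul, inv_mul_cancel₀ hp0, one_smul] at h2
    have hall : ∀ b0 : ZMod p, Pi.single b0 (1 : ℂ) ∈ W := by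
      intro b0
      have h3 := hW ⟨a0 - b0, 0, 0⟩ _ hsingle
      have heq2 : (rho p k ⟨a0 - b0, 0, 0⟩).mulVec (Pi.single a0 1)
          = Pi.single b0 (1 : ℂ) := by
        rw [Matrix.mulVec_single_one]
        funext i
        simp only [rho, Matrix.col_apply, Matrix.of_apply, mul_one]
        by_cases hib : i = b0
        · subst hib
          rw [if_pos (by ring), Pi.single_eq_same]
          have h4 : k * ((0 : ZMod p) + 0 * i) = 0 := by ring
          rw [h4, omegaPow_zero]
        · rw [if_neg (fun hcon => hib (by linear_combination -hcon)), Pi.single_eq_of_ne hib]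
      rwa [heq2] at h3
    rw [Submodule.eq_top_iff']
    intro f
    rw [← Finset.univ_sum_single f]
    show (∑ i : ZMod p, Pi.single i (f i)) ∈ W
    refine Submodule.sum_mem _ (fun i _ => ?_)
    have : Pi.single i (f i) = f i • (Pi.single i (1 : ℂ) : ZMod p → ℂ) := by
      funext j
      simp [Pi.single_apply, Pi.smul_apply]
    rw [this]
    exact Submodule.smul_mem _ _ (hall i)
  -- Part 3: distinct χ non-isomorphic
  · rintro a b a' b' hne ⟨e, he⟩
    have h1 : e 1 ≠ 0 := fun h =>
      one_ne_zero (e.injective (h.trans (map_zero e).symm))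
    have key : ∀ g : Heis p, chi p a b g = chi p a' b' g := by
      intro g
      have h2 := he g 1
      rw [mul_one] at h2
      have h3 : e (chi p a b g) = chi p a b g * e 1 := by
        calc e (chi p a b g) = e (chi p a b g • (1 : ℂ)) := by rw [smul_eq_mul, mul_one]
          _ = chi p a b g • e 1 := map_smul e _ _
          _ = chi p a b g * e 1 := rfl
      exact mul_right_cancel₀ h1 (h3.symm.trans h2)
    apply hne
    have ha : a = a' := by
      have h4 := key ⟨1, 0, 0⟩
      apply omegaPow_inj p
      simpa [chi] using h4
    have hb : b = b' := by
      have h4 := key ⟨0, 1, 0⟩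
      apply omegaPow_inj p
      simpa [chi] using h4
    rw [ha, hb]
  -- Part 4: distinct ρ non-isomorphic
  · rintro k k' hk hk' hkk' ⟨e, he⟩
    have hcent : ∀ (κ : ZMod p) (f : ZMod p → ℂ),
        (rho p κ ⟨0, 0, 1⟩).mulVec f = omegaPow p κ • f := by
      intro κ f
      funext a
      simp [rho, Matrix.mulVec, dotProduct, ite_mul]
    have hu : (Pi.single (0 : ZMod p) (1 : ℂ) : ZMod p → ℂ) ≠ 0 := by
      intro h
      have := congrFun h 0
      simp at this
    have heu : e (Pi.single (0 : ZMod p) (1 : ℂ) : ZMod p → ℂ) ≠ 0 := fun h =>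
      hu (e.injective (h.trans (map_zero e).symm))
    have h2 := he ⟨0, 0, 1⟩ (Pi.single (0:ZMod p) (1:ℂ))
    rw [hcent, hcent, map_smul] at h2
    have h3 : omegaPow p k = omegaPow p k' := by
      have h4 := sub_eq_zero.2 h2
      rw [← sub_smul] at h4
      rcases smul_eq_zero.1 h4 with h5 | h5
      · exact sub_eq_zero.1 h5
      · exact absurd h5 heu
    exact hkk' (omegaPow_inj p h3)
  -- Part 5: χ not isomorphic to ρ
  · rintro a b k hk ⟨e, -⟩
    have h1 := e.finrank_eq
    rw [Module.finrank_self, Module.finrank_pi, ZMod.card] at h1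
    omega
  -- Part 6: completeness
  · intro V _ _ _ π hnt hirr
    haveI := hnt
    obtain ⟨lam, hlam⟩ := schur_scalar π hirr (π ⟨0, 0, 1⟩) (by
      intro g v
      calc π ⟨0, 0, 1⟩ (π g v) = π ((⟨0, 0, 1⟩ : Heis p) * g) v := by
            rw [map_mul, Module.End.mul_apply]
        _ = π (g * ⟨0, 0, 1⟩) v := by rw [Heis.central_mul]
        _ = π g (π ⟨0, 0, 1⟩ v) := by rw [map_mul, Module.End.mul_apply])
    have hTn : ∀ (n : ℕ) (v : V), ((π ⟨0, 0, 1⟩) ^ n) v = lam ^ n • v := by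
      intro n
      induction n with
      | zero => intro v; simp
      | succ n ih =>
        intro v
        rw [pow_succ, Module.End.mul_apply, hlam, map_smul, ih, pow_succ, smul_smul,
          mul_comm]
    have hpow_scalar : ∀ (t : ZMod p) (v : V), π ⟨0, 0, t⟩ v = lam ^ t.val • v := by
      intro t v
      rw [← Heis.zpow t, map_pow, hTn]
    obtain ⟨v0, hv0⟩ := exists_ne (0 : V)
    have smul_inj : ∀ (c c' : ℂ), c • v0 = c' • v0 → c = c' := by
      intro c c' hcc
      exact smul_left_injective ℂ hv0 hcc
    have hlp : lam ^ p = 1 := by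
      have h1 : π ((⟨0, 0, 1⟩ : Heis p) ^ p) v0 = v0 := by
        rw [Heis.pow_p hp ho, map_one]; rfl
      rw [map_pow, hTn p v0] at h1
      have := smul_inj _ 1 (by rw [h1, one_smul])
      exact this
    obtain ⟨i, hip, hi⟩ := (zeta_prim p).eq_pow_of_pow_eq_one hlp
    set m : ZMod p := (i : ZMod p) with hm
    have hmval : m.val = i := by rw [hm, ZMod.val_natCast, Nat.mod_eq_of_lt hip]
    have hlam_eq : lam = omegaPow p m := by rw [omegaPow_eq, hmval, hi]
    have hcentral : ∀ (t : ZMod p) (v : V), π ⟨0, 0, t⟩ v = omegaPow p (m * t) • v := by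
      intro t v
      rw [hpow_scalar, hlam_eq, omegaPow_mul_val]
    by_cases hm0 : m = 0
    -- abelian case
    · left
      have htriv : ∀ (t : ZMod p) (v : V), π ⟨0, 0, t⟩ v = v := by
        intro t v
        rw [hcentral, hm0, zero_mul, omegaPow_zero, one_smul]
      have hcommall : ∀ (g h : Heis p) (v : V), π g (π h v) = π h (π g v) := by
        intro g h v
        calc π g (π h v) = π (g * h) v := by rw [map_mul, Module.End.mul_apply]
          _ = π ⟨0, 0, g.x * h.y - h.x * g.y⟩ (π (h * g) v) := by
              rw [Heis.comm_central g h, map_mul, Module.End.mul_apply]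
          _ = π (h * g) v := htriv _ _
          _ = π h (π g v) := by rw [map_mul, Module.End.mul_apply]
      have hsc : ∀ g : Heis p, ∃ μ, ∀ v, π g v = μ • v := fun g =>
        schur_scalar π hirr (π g) (fun h v => hcommall g h v)
      choose μ hμ using hsc
      have hμmul : ∀ g h : Heis p, μ (g * h) = μ g * μ h := by
        intro g h
        refine smul_inj _ _ ?_
        rw [← hμ, map_mul, Module.End.mul_apply, hμ g, hμ h, smul_smul, mul_comm]
      have hμone : μ 1 = 1 := by
        refine smul_inj _ _ ?_
        rw [← hμ, map_one, one_smul]; rfl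
      have hμpow : ∀ (g : Heis p) (n : ℕ), μ (g ^ n) = μ g ^ n := by
        intro g n
        induction n with
        | zero => simpa using hμone
        | succ n ih => rw [pow_succ, hμmul, ih, pow_succ]
      have hμp : ∀ g : Heis p, μ g ^ p = 1 := fun g => by
        rw [← hμpow, Heis.pow_p hp ho, hμone]
      obtain ⟨ia, hiap, hia⟩ := (zeta_prim p).eq_pow_of_pow_eq_one (hμp ⟨1, 0, 0⟩)
      obtain ⟨ib, hibp, hib⟩ := (zeta_prim p).eq_pow_of_pow_eq_one (hμp ⟨0, 1, 0⟩)
      set a : ZMod p := (ia : ZMod p) with hadef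
      set b : ZMod p := (ib : ZMod p) with hbdef
      have haval : a.val = ia := by rw [hadef, ZMod.val_natCast, Nat.mod_eq_of_lt hiap]
      have hbval : b.val = ib := by rw [hbdef, ZMod.val_natCast, Nat.mod_eq_of_lt hibp]
      have hμa : μ ⟨1, 0, 0⟩ = omegaPow p a := by rw [omegaPow_eq, haval]; exact hia.symm
      have hμb : μ ⟨0, 1, 0⟩ = omegaPow p b := by rw [omegaPow_eq, hbval]; exact hib.symm
      have hμz : μ ⟨0, 0, 1⟩ = 1 := by
        refine smul_inj _ _ ?_
        rw [← hμ, htriv, one_smul]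
      have hμchi : ∀ g : Heis p, μ g = chi p a b g := by
        intro g
        conv_lhs => rw [Heis.decomp g]
        rw [hμmul, hμmul, ← Heis.xpow g.x, ← Heis.ypow g.y,
          ← Heis.zpow (g.z - g.x * g.y), hμpow, hμpow, hμpow, hμz, one_pow, mul_one,
          hμa, hμb, ← omegaPow_mul_val, ← omegaPow_mul_val, ← omegaPow_add]
        rfl
      refine ⟨a, b, ?_⟩
      have hspan : Submodule.span ℂ {v0} = ⊤ := by
        rcases hirr (Submodule.span ℂ {v0}) (fun g v hv => by
          rw [hμ]; exact Submodule.smul_mem _ _ hv) with h | h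
        · exact absurd ((Submodule.span_singleton_eq_bot).1 h) hv0
        · exact h
      set f : ℂ →ₗ[ℂ] V := LinearMap.toSpanSingleton ℂ V v0 with hf
      have hfbij : Function.Bijective f := by
        constructor
        · intro c c' hcc
          exact smul_inj c c' hcc
        · intro v
          have : v ∈ LinearMap.range f := by
            rw [← LinearMap.span_singleton_eq_range, hspan]; trivial
          exact this
      refine ⟨(LinearEquiv.ofBijective f hfbij).symm, ?_⟩
      intro g v
      rw [hμ g v, map_smul, hμchi]
      rfl
    -- non-abelian case: isomorphic to ρ_m
    · right
      refine ⟨m, hm0, ?_⟩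
      set B := π (⟨0, 1, 0⟩ : Heis p) with hBdef
      obtain ⟨μ0, hμ0⟩ := Module.End.exists_eigenvalue (B : Module.End ℂ V)
      obtain ⟨w, hw⟩ := hμ0.exists_hasEigenvector
      have hBw : B w = μ0 • w := Module.End.mem_eigenspace_iff.1 hw.1
      have hw0 : w ≠ 0 := hw.2
      have hBn : ∀ (n : ℕ), (B ^ n) w = μ0 ^ n • w := by
        intro n
        induction n with
        | zero => simp
        | succ n ih =>
          rw [pow_succ', Module.End.mul_apply, ih, map_smul, hBw, smul_smul, ← pow_succ]
      have hμ0p : μ0 ^ p = 1 := by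
        have h1 : (B ^ p) w = w := by
          rw [hBdef, ← map_pow, Heis.pow_p hp ho, map_one]; rfl
        rw [hBn] at h1
        exact smul_left_injective ℂ hw0 (show μ0 ^ p • w = (1 : ℂ) • w by rw [h1, one_smul])
      obtain ⟨j, hjp, hj⟩ := (zeta_prim p).eq_pow_of_pow_eq_one hμ0p
      set J : ZMod p := (j : ZMod p) with hJdef
      have hJval : J.val = j := by rw [hJdef, ZMod.val_natCast, Nat.mod_eq_of_lt hjp]
      have hμ0eq : μ0 = omegaPow p J := by rw [omegaPow_eq, hJval]; exact hj.symm
      set c : ZMod p := J * m⁻¹ with hcdef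
      have hmc : m * c = J := by
        rw [hcdef, mul_comm J, ← mul_assoc, mul_inv_cancel₀ hm0, one_mul]
      set v : ZMod p → V := fun a => π ⟨a, 0, 0⟩ w with hvdef
      -- key formula
      have hform : ∀ (g : Heis p) (a : ZMod p),
          π g (v a) = omegaPow p (m * (g.z - (a + g.x) * g.y) + J * g.y) • v (a + g.x) := by
        intro g a
        have hga : g * (⟨a, 0, 0⟩ : Heis p)
            = (⟨a + g.x, 0, 0⟩ : Heis p) * ⟨0, g.y, 0⟩ * ⟨0, 0, g.z - (a + g.x) * g.y⟩ := by
          ext <;> simp [Heis.mul_def] <;> ring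
        have hBy : π (⟨0, g.y, 0⟩ : Heis p) w = omegaPow p (J * g.y) • w := by
          rw [← Heis.ypow g.y, map_pow, ← hBdef, hBn, hμ0eq, ← omegaPow_mul_val]
        calc π g (v a) = π (g * ⟨a, 0, 0⟩) w := by
              rw [map_mul, Module.End.mul_apply]
          _ = π ⟨a + g.x, 0, 0⟩ (π ⟨0, g.y, 0⟩ (π ⟨0, 0, g.z - (a + g.x) * g.y⟩ w)) := by
              rw [hga, map_mul, map_mul, Module.End.mul_apply, Module.End.mul_apply]
          _ = (omegaPow p (J * g.y) * omegaPow p (m * (g.z - (a + g.x) * g.y)))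
                • v (a + g.x) := by
              simp only [hcentral, hBy, map_smul, smul_smul, hvdef]
              rw [mul_comm]
          _ = _ := by rw [← omegaPow_add, add_comm (J * g.y)]
      have hEigen : ∀ a : ZMod p, B (v a) = omegaPow p (J - m * a) • v a := by
        intro a
        have h := hform ⟨0, 1, 0⟩ a
        dsimp only at h
        rw [show m * ((0 : ZMod p) - (a + 0) * 1) + J * 1 = J - m * a from by ring,
          add_zero] at h
        exact h
      have hvne : ∀ a : ZMod p, v a ≠ 0 := by
        intro a hva
        apply hw0
        have h1 : w = π (⟨a, 0, 0⟩ : Heis p)⁻¹ (π ⟨a, 0, 0⟩ w) := by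
          rw [← Module.End.mul_apply, ← map_mul, inv_mul_cancel, map_one]; rfl
        rw [show π (⟨a, 0, 0⟩ : Heis p) w = v a from rfl, hva, map_zero] at h1
        exact h1
      have hinj : Function.Injective (fun a : ZMod p => omegaPow p (J - m * a)) := by
        intro a a' hh
        have h2 := omegaPow_inj p hh
        have h3 : m * a = m * a' := by linear_combination -h2
        exact mul_left_cancel₀ hm0 h3
      have hli : LinearIndependent ℂ v :=
        Module.End.eigenvectors_linearIndependent' (B : Module.End ℂ V)
          (fun a => omegaPow p (J - m * a)) hinj v
          (fun a => ⟨Module.End.mem_eigenspace_iff.2 (hEigen a), hvne a⟩)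
      have hv0w : v 0 = w := by
        show π (⟨0, 0, 0⟩ : Heis p) w = w
        rw [← Heis.one_def, map_one]; rfl
      have hsp : Submodule.span ℂ (Set.range v) = ⊤ := by
        rcases hirr (Submodule.span ℂ (Set.range v)) (fun g u hu => by
          have hmap : Submodule.map (π g) (Submodule.span ℂ (Set.range v))
              ≤ Submodule.span ℂ (Set.range v) := by
            rw [Submodule.map_span, Submodule.span_le]
            rintro _ ⟨_, ⟨a, rfl⟩, rfl⟩
            rw [hform]
            exact Submodule.smul_mem _ _ (Submodule.subset_span ⟨a + g.x, rfl⟩)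
          exact hmap ⟨u, hu, rfl⟩) with h | h
        · exfalso
          apply hvne 0
          have : v 0 ∈ (⊥ : Submodule ℂ V) := h ▸ Submodule.subset_span ⟨0, rfl⟩
          exact (Submodule.mem_bot ℂ).1 this
        · exact h
      set bV : Module.Basis (ZMod p) ℂ V := Module.Basis.mk hli (by rw [hsp]) with hbV
      set bV' : Module.Basis (ZMod p) ℂ V := bV.reindex (Equiv.subLeft c) with hbV'
      have hb'eq : ∀ a : ZMod p, bV' (c - a) = v a := by
        intro a
        rw [hbV', Module.Basis.reindex_apply, hbV, Module.Basis.coe_mk]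
        congr 1
        simp [Equiv.subLeft]
      have heva : ∀ a : ZMod p, bV'.equivFun (v a) = Pi.single (c - a) (1 : ℂ) := by
        intro a
        rw [← hb'eq]
        funext i
        rw [Module.Basis.equivFun_self]
        simp [Pi.single_apply, eq_comm]
      refine ⟨bV'.equivFun, ?_⟩
      intro g u
      have hrho : ∀ b0 : ZMod p, (rho p m g).mulVec (Pi.single b0 (1 : ℂ))
          = omegaPow p (m * (g.z + g.y * (b0 - g.x)))
            • (Pi.single (b0 - g.x) (1 : ℂ) : ZMod p → ℂ) := by
        intro b0
        rw [Matrix.mulVec_single_one]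
        funext i
        simp only [rho, Matrix.col_apply, Matrix.of_apply, mul_one, Pi.smul_apply, smul_eq_mul]
        by_cases hib : i = b0 - g.x
        · subst hib
          rw [if_pos (by ring), Pi.single_eq_same, mul_one]
        · rw [if_neg (fun hcon => hib (by linear_combination -hcon)),
            Pi.single_eq_of_ne hib, mul_zero]
      have key : ∀ a : ZMod p,
          bV'.equivFun (π g (v a)) = (rho p m g).mulVec (bV'.equivFun (v a)) := by
        intro a
        rw [hform, map_smul, heva, heva, hrho,
          show c - (a + g.x) = c - a - g.x from by ring,
          show m * (g.z - (a + g.x) * g.y) + J * g.y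
            = m * (g.z + g.y * (c - a - g.x)) from by linear_combination -g.y * hmc]
      have hba : ∀ a : ZMod p, bV a = v a := by
        intro a; rw [hbV, Module.Basis.coe_mk]
      have hLmaps : (bV'.equivFun.toLinearMap.comp (π g : V →ₗ[ℂ] V))
          = (Matrix.mulVecLin (rho p m g)).comp bV'.equivFun.toLinearMap := by
        refine Module.Basis.ext bV ?_
        intro a
        simp only [LinearMap.comp_apply, LinearEquiv.coe_coe, Matrix.mulVecLin_apply, hba]
        exact key a
      have hfin := LinearMap.congr_fun hLmaps u
      simpa [Matrix.mulVecLin_apply] using hfin
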